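/- A connected graph G of order n ≥ 3 has local metric dimension n−2 if and only if its clique number ω(G) equals n−1. -/

import Mathlib

open SimpleGraph

/-- A set `S` is a local metric generator for `G` if every pair of adjacent
vertices is distinguished, by distance, by some element of `S`. -/
def IsLocalMetricGenerator {V : Type*} (G : SimpleGraph V) (S : Set V) : Prop :=
  ∀ ⦃u v : V⦄, G.Adj u v → ∃ w ∈ S, G.dist u w ≠ G.dist v w

/-- The local metric dimension of a graph. -/
noncomputable def localMetricDim {V : Type*} [Fintype V] (G : SimpleGraph V) : ℕ :=
  sInf {k | ∃ S : Finset V, IsLocalMetricGenerator G ↑S ∧ S.card = k}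

/-- A local metric basis: a local metric generator of minimum cardinality. -/
def IsLocalMetricBasis {V : Type*} [Fintype V] (G : SimpleGraph V) (S : Finset V) : Prop :=
  IsLocalMetricGenerator G ↑S ∧ S.card = localMetricDim G

/-!
If `ω(G) = n - 1`, then `G` is not complete and `G - t` is complete for some vertex `t`. Deleting
`t` and a neighbour `u` of `t` leaves a local metric generator, because the one remaining edge
`tu` is separated by any vertex of `G - t` not adjacent to `t`. Conversely, two vertices of the
clique `G - t` outside a generator can only be separated by `t`, and on a clique the distance to
`t` takes at most two values, so at most two vertices lie outside a generator.

If `dim_l(G) = n - 2`, then `G` is not complete (`dim_l(Kₙ) = n - 1`) and no set of `n - 3`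
vertices is a generator. So every triple contains an edge whose endpoints have the same neighbours
outside the triple. For an induced path `a - c - b`, the triples `{a, b, x}` make every other
vertex `x` an adjacent twin, away from `a` and `b`, of `a` or of `b`; this forces `G - a` or
`G - b` to be complete.
-/

section

variable {V : Type*} {G : SimpleGraph V}

theorem isLocalMetricGenerator_iff {S : Set V} :
    IsLocalMetricGenerator G S ↔
      ∀ ⦃u v⦄, G.Adj u v → u ∉ S → v ∉ S → ∃ w ∈ S, G.dist u w ≠ G.dist v w := by
  refine ⟨fun h u v huv _ _ => h huv, fun h u v huv => ?_⟩
  by_cases hu : u ∈ S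
  · exact ⟨u, hu, by rw [dist_self, dist_eq_one_iff_adj.2 huv.symm]; omega⟩
  by_cases hv : v ∈ S
  · exact ⟨v, hv, by rw [dist_self, dist_eq_one_iff_adj.2 huv]; omega⟩
  exact h huv hu hv

theorem IsLocalMetricGenerator.exists_notMem_of_isClique {S K : Set V}
    (hS : IsLocalMetricGenerator G S) (hK : G.IsClique K) {p q : V} (hp : p ∈ K) (hq : q ∈ K)
    (hpS : p ∉ S) (hqS : q ∉ S) (hpq : p ≠ q) :
    ∃ w ∈ S, w ∉ K ∧ G.dist p w ≠ G.dist q w := by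
  obtain ⟨w, hwS, hw⟩ := hS (hK hp hq hpq)
  refine ⟨w, hwS, fun hwK => hw ?_, hw⟩
  rw [dist_eq_one_iff_adj.2 (hK hp hwK (ne_of_mem_of_not_mem hwS hpS).symm),
    dist_eq_one_iff_adj.2 (hK hq hwK (ne_of_mem_of_not_mem hwS hqS).symm)]

theorem card_le_two_of_isClique_of_injOn_dist {K : Finset V} (hK : G.IsClique (K : Set V))
    {t : V} (hinj : Set.InjOn (G.dist · t) K) : K.card ≤ 2 := by
  by_contra! h
  obtain ⟨a, ha, b, hb, c, hc, hab, hac, hbc⟩ := Finset.two_lt_card.1 h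
  have hdist : ∀ {p q}, p ∈ K → q ∈ K → p ≠ q →
      G.dist p t ≠ G.dist q t ∧ (G.dist t q = G.dist t p ∨ G.dist t q = G.dist t p + 1 ∨
        G.dist t q = G.dist t p - 1) := fun hp hq hpq =>
    ⟨fun h => hpq (hinj hp hq h), (hK hp hq hpq).diff_dist_adj⟩
  have := hdist ha hb hab
  have := hdist ha hc hac
  have := hdist hb hc hbc
  simp only [dist_comm (u := t)] at *
  omega

theorem isClique_ne_of_forall_adj_twin {a b c : V}
    (htwin : ∀ x, x ≠ a → x ≠ b → ∃ u, (u = a ∨ u = b) ∧ G.Adj u x ∧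
      ∀ w, w ≠ a → w ≠ b → w ≠ x → (G.Adj u w ↔ G.Adj x w))
    (hac : G.Adj a c) (hbc : G.Adj b c)
    (hca : ∀ w, w ≠ a → w ≠ b → w ≠ c → (G.Adj a w ↔ G.Adj c w)) :
    G.IsClique {w | w ≠ b} := by
  have hadj_a : ∀ x, x ≠ a → x ≠ b → G.Adj a x := by
    intro x hxa hxb
    rcases eq_or_ne x c with rfl | hxc
    · exact hac
    obtain ⟨u, rfl | rfl, hux, hu⟩ := htwin x hxa hxb
    · exact hux
    · have hxc' : G.Adj x c := (hu c hac.ne' hbc.ne' hxc.symm).1 hbc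
      exact (hca x hxa hxb hxc).2 hxc'.symm
  intro x hxb y hyb hxy
  rcases eq_or_ne x a with rfl | hxa
  · exact hadj_a y (Ne.symm hxy) hyb
  rcases eq_or_ne y a with rfl | hya
  · exact (hadj_a x hxa hxb).symm
  obtain ⟨u, rfl | rfl, -, hu⟩ := htwin x hxa hxb
  · exact (hu y hya hyb hxy.symm).1 (hadj_a y hya hyb)
  obtain ⟨u', rfl | rfl, huy, hu'⟩ := htwin y hya hyb
  · exact ((hu' x hxa hxb hxy).1 (hadj_a x hxa hxb)).symm
  · exact (hu y hya hyb hxy.symm).1 huy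

end

section

variable {V : Type*} [Fintype V] {G : SimpleGraph V}

theorem IsLocalMetricGenerator.localMetricDim_le {S : Finset V}
    (hS : IsLocalMetricGenerator G S) : localMetricDim G ≤ S.card :=
  Nat.sInf_le ⟨S, hS, rfl⟩

theorem card_sub_le_localMetricDim [DecidableEq V] {m : ℕ}
    (h : ∀ S : Finset V, IsLocalMetricGenerator G S → Sᶜ.card ≤ m) :
    Fintype.card V - m ≤ localMetricDim G := by
  have huniv : IsLocalMetricGenerator G (Finset.univ : Finset V) :=
    isLocalMetricGenerator_iff.2 fun u _ _ hu => (hu (Finset.mem_univ u)).elim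
  refine le_csInf ⟨_, Finset.univ, huniv, rfl⟩ ?_
  rintro _ ⟨S, hS, rfl⟩
  have := h S hS
  rw [Finset.card_compl] at this
  omega

theorem card_sub_one_le_localMetricDim_top :
    Fintype.card V - 1 ≤ localMetricDim (⊤ : SimpleGraph V) := by
  classical
  refine card_sub_le_localMetricDim fun S hS => Finset.card_le_one.2 fun p hp q hq => ?_
  by_contra hpq
  rw [Finset.mem_compl, ← Finset.mem_coe] at hp hq
  obtain ⟨w, -, hw, -⟩ := hS.exists_notMem_of_isClique (isClique_univ.2 rfl) (Set.mem_univ p)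
    (Set.mem_univ q) hp hq hpq
  exact hw (Set.mem_univ w)

theorem card_sub_two_le_localMetricDim {t : V} (ht : G.IsClique {w | w ≠ t}) :
    Fintype.card V - 2 ≤ localMetricDim G := by
  classical
  refine card_sub_le_localMetricDim fun S hS => ?_
  have hsep : ∀ p ∈ Sᶜ, ∀ q ∈ Sᶜ, p ≠ t → q ≠ t → p ≠ q → t ∈ S ∧ G.dist p t ≠ G.dist q t := by
    intro p hp q hq hpt hqt hpq
    rw [Finset.mem_compl, ← Finset.mem_coe] at hp hq
    obtain ⟨w, hwS, hwt, hw⟩ := hS.exists_notMem_of_isClique ht hpt hqt hp hq hpq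
    obtain rfl : w = t := not_not.1 hwt
    exact ⟨hwS, hw⟩
  by_cases htS : t ∈ S
  · have hne : ∀ p ∈ Sᶜ, p ≠ t := fun p hp hpt => Finset.mem_compl.1 hp (hpt ▸ htS)
    refine card_le_two_of_isClique_of_injOn_dist (G := G) (t := t) (fun p hp q hq hpq => ?_)
      (fun p hp q hq hpq => ?_)
    · exact ht (hne p hp) (hne q hq) hpq
    · by_contra h
      exact (hsep p hp q hq (hne p hp) (hne q hq) h).2 hpq
  · have hle : (Sᶜ.erase t).card ≤ 1 := Finset.card_le_one.2 fun p hp q hq => by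
      by_contra hpq
      exact htS (hsep p (Finset.mem_of_mem_erase hp) q (Finset.mem_of_mem_erase hq)
        (Finset.ne_of_mem_erase hp) (Finset.ne_of_mem_erase hq) hpq).1
    have := Finset.card_erase_add_one (Finset.mem_compl.2 htS)
    omega

theorem localMetricDim_le_card_sub_two (hG : G.Connected) (htop : G ≠ ⊤) {t : V}
    (ht : G.IsClique {w | w ≠ t}) : localMetricDim G ≤ Fintype.card V - 2 := by
  classical
  obtain ⟨s, hst, hts⟩ : ∃ s, s ≠ t ∧ ¬G.Adj t s := by
    obtain ⟨a, b, hab, hnab⟩ := ne_top_iff_exists_not_adj.1 htop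
    by_cases hat : a = t
    · exact ⟨b, fun h => hab (hat.trans h.symm), hat ▸ hnab⟩
    · refine ⟨a, hat, fun hta => hnab ?_⟩
      obtain rfl : b = t := by_contra fun hbt => hnab (ht hat hbt hab)
      exact hta.symm
  have : Nontrivial V := ⟨⟨s, t, hst⟩⟩
  obtain ⟨u, htu⟩ := hG.preconnected.exists_adj_of_nontrivial t
  have hsu : s ≠ u := fun h => hts (h ▸ htu)
  have hS : IsLocalMetricGenerator G ↑({t, u}ᶜ : Finset V) := by
    refine isLocalMetricGenerator_iff.2 fun p q hpq hp hq => ⟨s, by simp [hst, hsu], ?_⟩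
    have hus : G.dist u s = 1 := dist_eq_one_iff_adj.2 (ht htu.ne' hst hsu.symm)
    have hts' : G.dist t s ≠ 1 := fun h => hts (dist_eq_one_iff_adj.1 h)
    simp only [Finset.coe_compl, Set.mem_compl_iff, not_not, Finset.coe_insert,
      Finset.coe_singleton, Set.mem_insert_iff, Set.mem_singleton_iff] at hp hq
    rcases hp with rfl | rfl <;> rcases hq with rfl | rfl
    · exact absurd hpq G.irrefl
    · rw [hus]; exact hts'
    · rw [hus]; exact hts'.symm
    · exact absurd hpq G.irrefl
  have := hS.localMetricDim_le
  rwa [Finset.card_compl, Finset.card_pair htu.ne] at this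

theorem exists_adj_twin_of_card_sub_two_le_localMetricDim (hn : 3 ≤ Fintype.card V)
    (hdim : Fintype.card V - 2 ≤ localMetricDim G) {a b c : V} (hab : a ≠ b) (hac : a ≠ c)
    (hbc : b ≠ c) (hnab : ¬G.Adj a b) :
    ∃ u, (u = a ∨ u = b) ∧ G.Adj u c ∧
      ∀ w, w ≠ a → w ≠ b → w ≠ c → (G.Adj u w ↔ G.Adj c w) := by
  classical
  have hS : ¬IsLocalMetricGenerator G ↑({a, b, c}ᶜ : Finset V) := fun hS => by
    have := hS.localMetricDim_le
    rw [Finset.card_compl, Finset.card_insert_of_notMem (by simp [hab, hac]),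
      Finset.card_pair hbc] at this
    omega
  simp only [isLocalMetricGenerator_iff, Finset.coe_compl, Set.mem_compl_iff, not_not,
    Finset.coe_insert, Finset.coe_singleton, Set.mem_insert_iff, Set.mem_singleton_iff] at hS
  push Not at hS
  obtain ⟨u, v, huv, hu, hv, hdist⟩ := hS
  have htwin : ∀ w, w ≠ a → w ≠ b → w ≠ c → (G.Adj u w ↔ G.Adj v w) := fun w h1 h2 h3 => by
    rw [← dist_eq_one_iff_adj, ← dist_eq_one_iff_adj, hdist w (by simp [h1, h2, h3])]
  have hc : u = c ∨ v = c := by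
    rcases hu with rfl | rfl | rfl <;> rcases hv with rfl | rfl | rfl <;>
      first | exact absurd huv G.irrefl | exact absurd huv hnab | exact absurd huv.symm hnab | simp
  rcases hc with rfl | rfl
  · refine ⟨v, ?_, huv.symm, fun w h1 h2 h3 => (htwin w h1 h2 h3).symm⟩
    exact hv.imp_right (·.resolve_right huv.ne')
  · exact ⟨u, hu.imp_right (·.resolve_right huv.ne), huv, htwin⟩

theorem exists_isClique_ne_of_card_sub_two_le_localMetricDim (hG : G.Connected)
    (hn : 3 ≤ Fintype.card V) (hdim : Fintype.card V - 2 ≤ localMetricDim G) (htop : G ≠ ⊤) :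
    ∃ t, G.IsClique {w | w ≠ t} := by
  obtain ⟨p, q, hpq, hnpq⟩ := ne_top_iff_exists_not_adj.1 htop
  obtain ⟨path, hpath⟩ := (hG p q).exists_walk_length_eq_dist
  obtain ⟨a, c, b, hac, hcb, hnab, hab⟩ :=
    path.exists_adj_adj_not_adj_ne hpath (hG.one_lt_dist_of_ne_of_not_adj hpq hnpq)
  have htwin {a b : V} (hab : a ≠ b) (hnab : ¬G.Adj a b) (x : V) (hxa : x ≠ a) (hxb : x ≠ b) :=
    exists_adj_twin_of_card_sub_two_le_localMetricDim hn hdim hab hxa.symm hxb.symm hnab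
  obtain ⟨u, rfl | rfl, -, hu⟩ := htwin hab hnab c hac.ne' hcb.ne
  · exact ⟨b, isClique_ne_of_forall_adj_twin (htwin hab hnab) hac hcb.symm hu⟩
  · exact ⟨a, isClique_ne_of_forall_adj_twin (htwin hab.symm fun h => hnab h.symm) hcb.symm hac
      fun w hwb hwa hwc => hu w hwa hwb hwc⟩

theorem cliqueNum_eq_card_sub_one_iff [Nonempty V] :
    G.cliqueNum = Fintype.card V - 1 ↔ G ≠ ⊤ ∧ ∃ t, G.IsClique {w | w ≠ t} := by
  classical
  have hpos := Fintype.card_pos (α := V)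
  obtain ⟨s, hs, hcard⟩ := G.exists_isNClique_cliqueNum
  have hclique_univ : G.IsClique ((Finset.univ : Finset V) : Set V) ↔ G = ⊤ := by
    rw [Finset.coe_univ, isClique_univ]
  constructor
  · intro h
    refine ⟨fun htop => ?_, ?_⟩
    · have := IsClique.card_le_cliqueNum (tc := hclique_univ.2 htop)
      rw [Finset.card_univ] at this
      omega
    · obtain ⟨t, ht⟩ := Finset.card_eq_one.1 (show sᶜ.card = 1 by rw [Finset.card_compl]; omega)
      refine ⟨t, hs.subset fun w hw => ?_⟩
      by_contra hws
      exact hw (Finset.mem_singleton.1 (ht ▸ Finset.mem_compl.2 hws))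
  · rintro ⟨htop, t, ht⟩
    refine le_antisymm ?_ ?_
    · by_contra h
      have hsuniv := Finset.eq_univ_of_card s (by have := s.card_le_univ; omega)
      exact htop (hclique_univ.1 (hsuniv ▸ hs))
    · have hle := IsClique.card_le_cliqueNum (t := Finset.univ.erase t)
        (tc := ht.subset fun w hw => Finset.ne_of_mem_erase hw)
      rwa [Finset.card_erase_of_mem (Finset.mem_univ t), Finset.card_univ] at hle

end

/-- A connected graph G of order n ≥ 3 has dim_l(G) = n - 2 iff ω(G) = n - 1. -/
theorem localMetricDim_eq_card_sub_two_iff {V : Type*} [Fintype V]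
    (G : SimpleGraph V) (hG : G.Connected) (hn : 3 ≤ Fintype.card V) :
    localMetricDim G = Fintype.card V - 2 ↔ G.cliqueNum = Fintype.card V - 1 := by
  have : Nonempty V := Fintype.card_pos_iff.1 (by omega)
  rw [cliqueNum_eq_card_sub_one_iff]
  constructor
  · intro hdim
    have htop : G ≠ ⊤ := by
      rintro rfl
      have := card_sub_one_le_localMetricDim_top (V := V)
      omega
    exact ⟨htop, exists_isClique_ne_of_card_sub_two_le_localMetricDim hG hn hdim.ge htop⟩
  · rintro ⟨htop, t, ht⟩
    exact le_antisymm (localMetricDim_le_card_sub_two hG htop ht)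
      (card_sub_two_le_localMetricDim ht)
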